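/- arXiv:1911.04529 — 2 statements merged into one kernel-verified Lean document; each statement's English description precedes it below -/
import Mathlib

section
/- Fix finite sets Y, V, T, utility u : Y × V → ℝ, prior π on V, an information structure σ : V → Δ(T) (i.e., σ(t|v) ≥ 0 with ∑_t σ(t|v) = 1 for each v), and a strategy s : T → Δ(Y) that is optimal: for every t with ∑_v σ(t|v)π(v) > 0 and every y with s(y|t) > 0, ∑_v σ(t|v)π(v)u(y,v) ≥ ∑_v σ(t|v)π(v)u(y',v) for all y'. Then the induced joint distribution q(y,v) = ∑_t s(y|t)·σ(t|v)·π(v) is a 1BCE of (Y, V, u, π). -/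
theorem optimal_strategy_induces_oneBCE (Y V T : Type) [Fintype Y] [Fintype V] [Fintype T]
    (u : Y → V → ℝ) (π : V → ℝ) (hπ0 : ∀ v, 0 ≤ π v) (hπ1 : (∑ v, π v) = 1)
    (σ : V → T → ℝ) (hσ0 : ∀ v t, 0 ≤ σ v t) (hσ1 : ∀ v, (∑ t, σ v t) = 1)
    (s : T → Y → ℝ) (hs0 : ∀ t y, 0 ≤ s t y) (hs1 : ∀ t, (∑ y, s t y) = 1)
    (hopt : ∀ t, 0 < (∑ v, σ v t * π v) → ∀ y, 0 < s t y →
      ∀ y', (∑ v, σ v t * π v * u y' v) ≤ ∑ v, σ v t * π v * u y v) :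
    (∀ v, (∑ y, ∑ t, s t y * σ v t * π v) = π v) ∧
    (∀ y y', 0 ≤ ∑ v, (∑ t, s t y * σ v t * π v) * (u y v - u y' v)) := by
  constructor
  · intro v
    rw [Finset.sum_comm]
    have : ∀ t, (∑ y, s t y * σ v t * π v) = σ v t * π v := by
      intro t
      rw [← Finset.sum_mul, ← Finset.sum_mul, hs1, one_mul]
    simp_rw [this, ← Finset.sum_mul, hσ1, one_mul]
  · intro y y'
    have key : (∑ v, (∑ t, s t y * σ v t * π v) * (u y v - u y' v))
        = ∑ t, s t y * (∑ v, σ v t * π v * (u y v - u y' v)) := by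
      simp_rw [Finset.sum_mul, Finset.mul_sum]
      rw [Finset.sum_comm]
      congr 1; ext t; congr 1; ext v; ring
    rw [key]
    apply Finset.sum_nonneg
    intro t _
    rcases eq_or_lt_of_le (hs0 t y) with h | h
    · rw [← h, zero_mul]
    · apply mul_nonneg h.le
      rcases eq_or_lt_of_le (Finset.sum_nonneg (fun v _ => mul_nonneg (hσ0 v t) (hπ0 v)) :
          (0:ℝ) ≤ ∑ v, σ v t * π v) with h2 | h2
      · have hz : ∀ v ∈ Finset.univ, σ v t * π v = 0 := by
          intro v _
          exact (Finset.sum_eq_zero_iff_of_nonneg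
            (fun v _ => mul_nonneg (hσ0 v t) (hπ0 v))).mp h2.symm v (Finset.mem_univ v)
        apply le_of_eq
        symm
        apply Finset.sum_eq_zero
        intro v _
        rw [hz v (Finset.mem_univ v), zero_mul]
      · have := hopt t h2 y h y'
        have expand : (∑ v, σ v t * π v * (u y v - u y' v))
            = (∑ v, σ v t * π v * u y v) - ∑ v, σ v t * π v * u y' v := by
          rw [← Finset.sum_sub_distrib]
          congr 1; ext v; ring
        rw [expand]
        linarith
end

section
/- Fix finite sets Y, V, utility u : Y × V → ℝ, prior π on V, and let q : Y × V → [0,1] be a 1BCE. Then there exist a finite signal set T, an information structure σ : V → Δ(T), and an optimal strategy s : T → Δ(Y) such that q(y,v) = ∑_t s(y|t)σ(t|v)π(v) for all y, v. In fact one may take T = Y, σ(t|v) = q(t,v)/π(v) whenever π(v) > 0 (arbitrary otherwise), and s the strategy that follows the recommendation, s(y|t) = 1{y = t}. -/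
theorem oneBCE_decomposes_into_info_structure (Y V : Type) [Fintype Y] [Fintype V]
    (u : Y → V → ℝ) (π : V → ℝ) (hπ0 : ∀ v, 0 ≤ π v) (hπ1 : (∑ v, π v) = 1)
    (q : Y → V → ℝ) (hq0 : ∀ y v, 0 ≤ q y v)
    (hcons : ∀ v, (∑ y, q y v) = π v)
    (hobed : ∀ y y', 0 ≤ ∑ v, q y v * (u y v - u y' v)) :
    ∃ (T : Type) (_ : Fintype T) (σ : V → T → ℝ) (s : T → Y → ℝ),
      (∀ v t, 0 ≤ σ v t) ∧ (∀ v, (∑ t, σ v t) = 1) ∧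
      (∀ t y, 0 ≤ s t y) ∧ (∀ t, (∑ y, s t y) = 1) ∧
      (∀ t, 0 < (∑ v, σ v t * π v) → ∀ y, 0 < s t y →
        ∀ y', (∑ v, σ v t * π v * u y' v) ≤ ∑ v, σ v t * π v * u y v) ∧
      (∀ y v, q y v = ∑ t, s t y * σ v t * π v) := by
  classical
  have hY : Nonempty Y := by
    by_contra h
    have hcard : (Fintype.card Y) = 0 := by
      simp [Fintype.card_eq_zero_iff.2 (not_nonempty_iff.mp h)]
    have : ∀ v, π v = 0 := by
      intro v
      rw [← hcons v]
      exact Finset.sum_eq_zero (fun y _ => absurd ⟨y⟩ h)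
    simp [this] at hπ1
  have hcardY : (0 : ℝ) < (Fintype.card Y : ℝ) := by
    exact_mod_cast Fintype.card_pos
  -- key fact: q y v = 0 when π v = 0
  have hq0' : ∀ y v, π v = 0 → q y v = 0 := by
    intro y v hv
    have hsum : (∑ y, q y v) = 0 := by rw [hcons v, hv]
    have := (Finset.sum_eq_zero_iff_of_nonneg (fun y _ => hq0 y v)).1 hsum
    exact this y (Finset.mem_univ y)
  refine ⟨Y, inferInstance,
    fun v t => if π v = 0 then (Fintype.card Y : ℝ)⁻¹ else q t v / π v,
    fun t y => if y = t then 1 else 0, ?_, ?_, ?_, ?_, ?_, ?_⟩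
  · intro v t
    by_cases hv : π v = 0
    · simp [hv, le_of_lt (inv_pos.2 hcardY)]
    · simp only [hv, if_false]
      exact div_nonneg (hq0 t v) (hπ0 v)
  · intro v
    by_cases hv : π v = 0
    · simp [hv, Finset.sum_const, mul_inv_cancel₀ (ne_of_gt hcardY)]
    · simp only [hv, if_false, ← Finset.sum_div, hcons v, div_self hv]
  · intro t y; dsimp only; split <;> norm_num
  · intro t; simp
  · intro t _ y hy y'
    have hyt : y = t := by by_contra h; simp [h] at hy
    subst hyt
    have key : ∀ y'' v, (if π v = 0 then (Fintype.card Y : ℝ)⁻¹ else q y v / π v) * π v * u y'' v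
        = q y v * u y'' v := by
      intro y'' v
      by_cases hv : π v = 0
      · simp [hv, hq0' y v hv]
      · simp [hv]
    simp only [key]
    have := hobed y y'
    have hexp : (∑ v, q y v * (u y v - u y' v))
        = (∑ v, q y v * u y v) - ∑ v, q y v * u y' v := by
      rw [← Finset.sum_sub_distrib]; congr 1; ext v; ring
    linarith [hexp ▸ this]
  · intro y v
    have : ∀ t : Y, (if y = t then (1:ℝ) else 0) *
        (if π v = 0 then (Fintype.card Y : ℝ)⁻¹ else q t v / π v) * π v
        = if y = t then q y v else 0 := by
      intro t
      by_cases ht : y = t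
      · subst ht
        by_cases hv : π v = 0
        · simp [hv, hq0' y v hv]
        · simp [hv]
      · simp [ht]
    simp only [this]
    rw [Finset.sum_ite_eq Finset.univ y (fun _ => q y v)]
    simp
end
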